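/- arXiv:2309.04035 — 2 statements merged into one kernel-verified Lean document; each statement's English description precedes it below -/
import Mathlib

section
/- Let f : ℝ² → ℝ be twice continuously differentiable on a neighborhood of a point p ∈ ℝ², let w : ℝ² → ℝ³ with components (w₁, w₂, w₃) be differentiable at p, and suppose f_x(p) = f_y(p) = 0 and w₃(p) = 0. Then the local-coordinate surface divergence expression g^{11} ∂_x̂((∂_x̂ f̂)·w) + g^{12} ∂_ŷ((∂_x̂ f̂)·w) + g^{21} ∂_x̂((∂_ŷ f̂)·w) + g^{22} ∂_ŷ((∂_ŷ f̂)·w), with all quantities evaluated at p, equals ∂_x̂ w₁(p) + ∂_ŷ w₂(p). That is, at a point where the tangent plane is horizontal and the vector field is tangential, the local-coordinate formulation of the surface divergence reduces to the tangent plane formulation. -/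
/-! At `p` the metric is the identity since `f_x = f_y = 0`, and the terms `f_x w₃`, `f_y w₃`
have vanishing derivative there by the product rule, both factors vanishing at `p`. -/

/-- Partial derivative with respect to the first coordinate. -/
noncomputable def pdx (g : ℝ × ℝ → ℝ) (z : ℝ × ℝ) : ℝ := fderiv ℝ g z (1, 0)

/-- Partial derivative with respect to the second coordinate. -/
noncomputable def pdy (g : ℝ × ℝ → ℝ) (z : ℝ × ℝ) : ℝ := fderiv ℝ g z (0, 1)

section

variable {𝕜 E F : Type*} [NontriviallyNormedField 𝕜] [NormedAddCommGroup E] [NormedSpace 𝕜 E]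
  [NormedAddCommGroup F] [NormedSpace 𝕜 F]

theorem ContDiffAt.differentiableAt_fderiv_apply {f : E → F} {x : E} (hf : ContDiffAt 𝕜 2 f x)
    (v : E) : DifferentiableAt 𝕜 (fun z => fderiv 𝕜 f z v) x :=
  ((hf.fderiv_right (m := 1) le_rfl).differentiableAt one_ne_zero).clm_apply
    (differentiableAt_const v)

theorem fderiv_add_mul_of_eq_zero {u g h : E → 𝕜} {x : E} (hu : DifferentiableAt 𝕜 u x)
    (hg : DifferentiableAt 𝕜 g x) (hh : DifferentiableAt 𝕜 h x) (hgx : g x = 0)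
    (hhx : h x = 0) : fderiv 𝕜 (fun z => u z + g z * h z) x = fderiv 𝕜 u x := by
  rw [fderiv_fun_add hu (hg.fun_mul hh), fderiv_fun_mul hg hh, hgx, hhx]
  ext v
  simp

end

theorem surface_divergence_tangent_plane (f w1 w2 w3 : ℝ × ℝ → ℝ) (p : ℝ × ℝ)
    (hf : ContDiffAt ℝ 2 f p)
    (hw1 : DifferentiableAt ℝ w1 p) (hw2 : DifferentiableAt ℝ w2 p)
    (hw3 : DifferentiableAt ℝ w3 p)
    (hfx : pdx f p = 0) (hfy : pdy f p = 0) (hw3p : w3 p = 0)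
    (G : Matrix (Fin 2) (Fin 2) ℝ)
    (hG : G = !![1 + pdx f p ^ 2, pdx f p * pdy f p;
                 pdx f p * pdy f p, 1 + pdy f p ^ 2]) :
    G⁻¹ 0 0 * pdx (fun z => w1 z + pdx f z * w3 z) p
      + G⁻¹ 0 1 * pdy (fun z => w1 z + pdx f z * w3 z) p
      + G⁻¹ 1 0 * pdx (fun z => w2 z + pdy f z * w3 z) p
      + G⁻¹ 1 1 * pdy (fun z => w2 z + pdy f z * w3 z) p
      = pdx w1 p + pdy w2 p := by
  have hG_inv : G⁻¹ = 1 := by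
    rw [hG, hfx, hfy]
    norm_num [← Matrix.one_fin_two]
  have hdx : pdx (fun z => w1 z + pdx f z * w3 z) p = pdx w1 p :=
    congrArg (· (1, 0))
      (fderiv_add_mul_of_eq_zero hw1 (hf.differentiableAt_fderiv_apply _) hw3 hfx hw3p)
  have hdy : pdy (fun z => w2 z + pdy f z * w3 z) p = pdy w2 p :=
    congrArg (· (0, 1))
      (fderiv_add_mul_of_eq_zero hw2 (hf.differentiableAt_fderiv_apply _) hw3 hfy hw3p)
  simp [hG_inv, hdx, hdy]
end

section
/- Let f : ℝ² → ℝ and u : ℝ² → ℝ be twice continuously differentiable on a neighborhood of a point z ∈ ℝ². Write D = 1 + f_x² + f_y², g^{11} = (1 + f_y²)/D, g^{12} = g^{21} = −f_x f_y / D, g^{22} = (1 + f_x²)/D, and √|g| = √D. Then the divergence form of the Laplace–Beltrami operator, (1/√|g|)[∂_x̂(√|g|(g^{11} u_x + g^{12} u_y)) + ∂_ŷ(√|g|(g^{21} u_x + g^{22} u_y))], evaluated at z, equals D⁻² [ (f_y f_{x̂ŷ}(1 + 2f_x² + f_y²) − (f_x f_{x̂x̂} + f_y f_{x̂ŷ})(1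 + f_y²) − f_x f_{ŷŷ}(1 + f_x²)) u_x + (f_x f_{x̂ŷ}(1 + 2f_y² + f_x²) − (f_y f_{ŷŷ} + f_x f_{x̂ŷ})(1 + f_x²) − f_y f_{x̂x̂}(1 + f_y²)) u_y ] + g^{11} u_{x̂x̂} + 2 g^{12} u_{x̂ŷ} + g^{22} u_{ŷŷ}, with all quantities evaluated at z. -/
/-- Determinant of the Monge-patch metric tensor: `|g| = 1 + f_x² + f_y²`. -/
noncomputable def Dg (f : ℝ × ℝ → ℝ) (z : ℝ × ℝ) : ℝ := 1 + pdx f z ^ 2 + pdy f z ^ 2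

/-- Entry `g¹¹ = (1 + f_y²)/|g|` of the inverse metric tensor. -/
noncomputable def g11 (f : ℝ × ℝ → ℝ) (z : ℝ × ℝ) : ℝ := (1 + pdy f z ^ 2) / Dg f z

/-- Entry `g¹² = g²¹ = -f_x f_y/|g|` of the inverse metric tensor. -/
noncomputable def g12 (f : ℝ × ℝ → ℝ) (z : ℝ × ℝ) : ℝ := -(pdx f z * pdy f z) / Dg f z

/-- Entry `g²² = (1 + f_x²)/|g|` of the inverse metric tensor. -/
noncomputable def g22 (f : ℝ × ℝ → ℝ) (z : ℝ × ℝ) : ℝ := (1 + pdx f z ^ 2) / Dg f z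


/-!
Since `√|g| g^{ij}` has denominator `√D`, both flux components are of the form `Nᵢ / √D` with
`Nᵢ` polynomial in the first derivatives of `f` and `u`. The quotient rule turns
`(1/√D) div (N/√D)` into `(div N - N·∇D / (2D)) / D`, which contains no square roots; the
claimed identity is then rational-function algebra, once the mixed partials of `f` and `u` are
identified by Schwarz's theorem.
-/

section Calculus

variable {E : Type*} [NormedAddCommGroup E] [NormedSpace ℝ E]

theorem fderiv_fderiv_apply_const {F : Type*} [NormedAddCommGroup F] [NormedSpace ℝ F]
    {f : E → F} {x : E} (hf : DifferentiableAt ℝ (fderiv ℝ f) x) (v w : E) :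
    fderiv ℝ (fun y => fderiv ℝ f y v) x w = fderiv ℝ (fderiv ℝ f) x w v := by
  rw [fderiv_clm_apply hf (differentiableAt_const v)]
  simp

theorem HasFDerivAt.div_sqrt {N D : E → ℝ} {N' D' : E →L[ℝ] ℝ} {x : E}
    (hN : HasFDerivAt N N' x) (hD : HasFDerivAt D D' x) (hx : 0 < D x) :
    HasFDerivAt (fun y => N y / √(D y)) ((√(D x))⁻¹ • (N' - (N x / (2 * D x)) • D')) x := by
  have hs : √(D x) ≠ 0 := (Real.sqrt_pos.2 hx).ne'
  have hinv := (hasDerivAt_inv hs).comp_hasFDerivAt x (hD.sqrt hx.ne')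
  refine (hN.mul hinv).congr_fderiv ?_
  ext v
  have hsq := Real.sq_sqrt hx.le
  simp only [add_apply, sub_apply, smul_apply, smul_eq_mul, Function.comp_apply]
  generalize √(D x) = s at hs hsq ⊢
  rw [← hsq]
  field_simp
  ring

end Calculus

theorem ContDiffAt.differentiableAt_pdx {f : ℝ × ℝ → ℝ} {z : ℝ × ℝ} (hf : ContDiffAt ℝ 2 f z) :
    DifferentiableAt ℝ (pdx f) z :=
  ((hf.fderiv_right (m := 1) (by norm_num)).differentiableAt one_ne_zero).clm_apply
    (differentiableAt_const _)

theorem ContDiffAt.differentiableAt_pdy {f : ℝ × ℝ → ℝ} {z : ℝ × ℝ} (hf : ContDiffAt ℝ 2 f z) :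
    DifferentiableAt ℝ (pdy f) z :=
  ((hf.fderiv_right (m := 1) (by norm_num)).differentiableAt one_ne_zero).clm_apply
    (differentiableAt_const _)

theorem ContDiffAt.pdy_pdx_eq_pdx_pdy {f : ℝ × ℝ → ℝ} {z : ℝ × ℝ} (hf : ContDiffAt ℝ 2 f z) :
    pdy (pdx f) z = pdx (pdy f) z := by
  have h := (hf.fderiv_right (m := 1) (by norm_num)).differentiableAt one_ne_zero
  change fderiv ℝ (fun w => fderiv ℝ f w (1, 0)) z (0, 1)
    = fderiv ℝ (fun w => fderiv ℝ f w (0, 1)) z (1, 0)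
  rw [fderiv_fderiv_apply_const h, fderiv_fderiv_apply_const h]
  exact hf.isSymmSndFDerivAt (by simp) _ _

theorem Dg_pos (f : ℝ × ℝ → ℝ) (z : ℝ × ℝ) : 0 < Dg f z := by
  unfold Dg; positivity

theorem one_div_sqrt_mul_divergence_div_sqrt {N₁ N₂ D : ℝ × ℝ → ℝ} {N₁' N₂' D' : ℝ × ℝ →L[ℝ] ℝ}
    {z : ℝ × ℝ} (h₁ : HasFDerivAt N₁ N₁' z) (h₂ : HasFDerivAt N₂ N₂' z)
    (hD : HasFDerivAt D D' z) (hz : 0 < D z) :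
    1 / √(D z) * (pdx (fun w => N₁ w / √(D w)) z + pdy (fun w => N₂ w / √(D w)) z)
      = (N₁' (1, 0) + N₂' (0, 1) - (N₁ z * D' (1, 0) + N₂ z * D' (0, 1)) / (2 * D z)) / D z := by
  rw [pdx, pdy, (h₁.div_sqrt hD hz).fderiv, (h₂.div_sqrt hD hz).fderiv]
  simp only [smul_apply, sub_apply, smul_eq_mul]
  have hs : √(D z) ≠ 0 := (Real.sqrt_pos.2 hz).ne'
  have hsq := Real.sq_sqrt hz.le
  generalize √(D z) = s at hs hsq ⊢
  rw [← hsq]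
  field_simp
  ring

theorem sqrt_Dg_mul_g11_add_g12 (f : ℝ × ℝ → ℝ) (w : ℝ × ℝ) (a b : ℝ) :
    √(Dg f w) * (g11 f w * a + g12 f w * b)
      = ((1 + pdy f w ^ 2) * a - pdx f w * pdy f w * b) / √(Dg f w) := by
  have hs : √(Dg f w) ≠ 0 := (Real.sqrt_pos.2 (Dg_pos f w)).ne'
  unfold g11 g12
  have hsq := Real.sq_sqrt (Dg_pos f w).le
  generalize √(Dg f w) = s at hs hsq ⊢
  rw [← hsq]
  field_simp
  ring

theorem sqrt_Dg_mul_g12_add_g22 (f : ℝ × ℝ → ℝ) (w : ℝ × ℝ) (a b : ℝ) :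
    √(Dg f w) * (g12 f w * a + g22 f w * b)
      = ((1 + pdx f w ^ 2) * b - pdx f w * pdy f w * a) / √(Dg f w) := by
  have hs : √(Dg f w) ≠ 0 := (Real.sqrt_pos.2 (Dg_pos f w)).ne'
  unfold g12 g22
  have hsq := Real.sq_sqrt (Dg_pos f w).le
  generalize √(Dg f w) = s at hs hsq ⊢
  rw [← hsq]
  field_simp
  ring

theorem laplace_beltrami_expansion (f u : ℝ × ℝ → ℝ) (z : ℝ × ℝ)
    (hf : ContDiffAt ℝ 2 f z) (hu : ContDiffAt ℝ 2 u z) :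
    (1 / Real.sqrt (Dg f z)) *
      (pdx (fun w => Real.sqrt (Dg f w) * (g11 f w * pdx u w + g12 f w * pdy u w)) z
        + pdy (fun w => Real.sqrt (Dg f w) * (g12 f w * pdx u w + g22 f w * pdy u w)) z)
    = (1 / (Dg f z) ^ 2) *
        ((pdy f z * pdy (pdx f) z * (1 + 2 * pdx f z ^ 2 + pdy f z ^ 2)
            - (pdx f z * pdx (pdx f) z + pdy f z * pdy (pdx f) z) * (1 + pdy f z ^ 2)
            - pdx f z * pdy (pdy f) z * (1 + pdx f z ^ 2)) * pdx u z
          + (pdx f z * pdy (pdx f) z * (1 + 2 * pdy f z ^ 2 + pdx f z ^ 2)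
            - (pdy f z * pdy (pdy f) z + pdx f z * pdy (pdx f) z) * (1 + pdx f z ^ 2)
            - pdy f z * pdx (pdx f) z * (1 + pdy f z ^ 2)) * pdy u z)
      + g11 f z * pdx (pdx u) z + 2 * g12 f z * pdy (pdx u) z
      + g22 f z * pdy (pdy u) z := by
  have hp := hf.differentiableAt_pdx.hasFDerivAt
  have hq := hf.differentiableAt_pdy.hasFDerivAt
  have ha := hu.differentiableAt_pdx.hasFDerivAt
  have hb := hu.differentiableAt_pdy.hasFDerivAt
  have hD : HasFDerivAt (Dg f) _ z := ((hasFDerivAt_const 1 z).add (hp.pow 2)).add (hq.pow 2)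
  have hN₁ : HasFDerivAt (fun w => (1 + pdy f w ^ 2) * pdx u w - pdx f w * pdy f w * pdy u w) _ z :=
    (((hasFDerivAt_const 1 z).add (hq.pow 2)).mul ha).sub ((hp.mul hq).mul hb)
  have hN₂ : HasFDerivAt (fun w => (1 + pdx f w ^ 2) * pdy u w - pdx f w * pdy f w * pdx u w) _ z :=
    (((hasFDerivAt_const 1 z).add (hp.pow 2)).mul hb).sub ((hp.mul hq).mul ha)
  simp_rw [sqrt_Dg_mul_g11_add_g12, sqrt_Dg_mul_g12_add_g22]
  rw [one_div_sqrt_mul_divergence_div_sqrt hN₁ hN₂ hD (Dg_pos f z)]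
  simp only [add_apply, sub_apply, smul_apply, zero_apply, smul_eq_mul, Pi.add_apply, Pi.mul_apply,
    ← pdx.eq_1, ← pdy.eq_1]
  rw [hf.pdy_pdx_eq_pdx_pdy, hu.pdy_pdx_eq_pdx_pdy]
  unfold g11 g12 g22 Dg
  field_simp
  ring
end
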